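/- Let d be an odd prime, γ = exp(2πi/d), and for k ∈ {1,…,d−1}, t ∈ {0,…,d−1} define |γ_t^{(k)}⟩ = (1/√d) Σ_{h=0}^{d−1} γ^{t(d−h)} γ^{−k α_h} |h⟩ with α_h = h + … + (d−1). Then |γ_t^{(k)}⟩ ∙ (|γ_t^{(k)}⟩)† = |0⟩, i.e. the corresponding operator Z_t^{(k)} = (1/√d) Σ_h γ^{t(d−h)} γ^{−k α_h} Z^h is unitary. -/

import Mathlib

open Matrix Complex

noncomputable def omega (d : ℕ) : ℂ := Complex.exp (2 * Real.pi * Complex.I / d)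

noncomputable def Zmat (d : ℕ) : Matrix (Fin d) (Fin d) ℂ :=
  Matrix.diagonal (fun j : Fin d => omega d ^ (j : ℕ))

noncomputable def Gmap (d : ℕ) (φ : Fin d → ℂ) : Matrix (Fin d) (Fin d) ℂ :=
  ∑ i : Fin d, φ i • Zmat d ^ (i : ℕ)

noncomputable def conv (d : ℕ) [NeZero d] (φ ψ : Fin d → ℂ) : Fin d → ℂ :=
  fun q => ∑ i : Fin d, φ i * ψ (q - i)

noncomputable def evec (d : ℕ) [NeZero d] : Fin d → ℂ :=
  fun q => if q = 0 then 1 else 0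

noncomputable def dagVec (d : ℕ) [NeZero d] (φ : Fin d → ℂ) : Fin d → ℂ :=
  fun j => starRingEnd ℂ (φ (-j))

/-- `α_h = h + (h+1) + … + (d−1)`. -/
def alphaSum (d h : ℕ) : ℕ := ∑ j ∈ Finset.Ico h d, j

/-- `|γ_t^{(k)}⟩ = (1/√d) Σ_{h=0}^{d−1} γ^{t(d−h)} γ^{−k α_h} |h⟩`. -/
noncomputable def gvec (d k t : ℕ) : Fin d → ℂ := fun h =>
  (1 / (Real.sqrt d : ℂ)) * omega d ^ (t * (d - (h : ℕ))) *
    (omega d ^ (k * alphaSum d (h : ℕ)))⁻¹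

/-!
Modulo `d` one has `2 α_h ≡ h - h²`, so, up to the factor `1/√d`, `|γ_t^{(k)}⟩` is the chirp
`h ↦ ψ (a h² + b h)` of the standard additive character `ψ` of `ZMod d`, with `a = k/2 ≠ 0`
(`d` is odd). For a chirp, `φ x · conj (φ (x - q)) = ψ (b q - a q²) · ψ (2 a q · x)` is a
character in `x`, so summing over `x` gives `d` for `q = 0` and `0` otherwise, since `2 a q ≠ 0`
in the field `ZMod d`. Unitarity follows because `G` is diagonal with the discrete Fourier
transform on the diagonal, which turns `∙` into the pointwise product and `†` into conjugation.
-/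

lemma ZMod.finEquiv_apply (d : ℕ) [NeZero d] (i : Fin d) :
    ZMod.finEquiv d i = ((i : ℕ) : ZMod d) := by
  obtain ⟨n, rfl⟩ : ∃ n, d = n + 1 := Nat.exists_eq_succ_of_ne_zero (NeZero.ne d)
  exact (Fin.cast_val_eq_self i).symm

section Fourier

variable (d : ℕ) [NeZero d]

lemma omega_pow_eq_stdAddChar (n : ℕ) : omega d ^ n = ZMod.stdAddChar (n : ZMod d) := by
  rw [← Int.cast_natCast, ZMod.stdAddChar_coe, omega, ← Complex.exp_nat_mul]
  congr 1
  push_cast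
  ring

noncomputable def finFourier (φ : Fin d → ℂ) (j : Fin d) : ℂ :=
  ∑ i, φ i * ZMod.stdAddChar (ZMod.finEquiv d j * ZMod.finEquiv d i)

lemma Gmap_eq_diagonal_finFourier (φ : Fin d → ℂ) :
    Gmap d φ = diagonal (finFourier d φ) := by
  ext a b
  by_cases hab : a = b
  · subst hab
    simp only [Gmap, Zmat, finFourier, Matrix.sum_apply, Matrix.smul_apply, diagonal_pow,
      diagonal_apply_eq, Pi.pow_apply, smul_eq_mul, ← pow_mul]
    simp only [omega_pow_eq_stdAddChar, ZMod.finEquiv_apply, Nat.cast_mul]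
  · simp [Gmap, Zmat, Matrix.sum_apply, diagonal_pow, hab]

lemma finFourier_conv (φ χ : Fin d → ℂ) (j : Fin d) :
    finFourier d (conv d φ χ) j = finFourier d φ j * finFourier d χ j := by
  simp only [finFourier, conv, Finset.sum_mul]
  rw [Finset.sum_comm]
  refine Finset.sum_congr rfl fun i _ => ?_
  rw [Finset.mul_sum]
  refine Fintype.sum_equiv (Equiv.subRight i) _ _ fun q => ?_
  have hsplit : ZMod.stdAddChar (ZMod.finEquiv d j * ZMod.finEquiv d q) =
      ZMod.stdAddChar (ZMod.finEquiv d j * ZMod.finEquiv d i) *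
        ZMod.stdAddChar (ZMod.finEquiv d j * ZMod.finEquiv d (q - i)) := by
    rw [← AddChar.map_add_eq_mul, map_sub, ← mul_add, add_sub_cancel]
  rw [hsplit, Equiv.subRight_apply]
  ring

lemma finFourier_dagVec (φ : Fin d → ℂ) (j : Fin d) :
    finFourier d (dagVec d φ) j = starRingEnd ℂ (finFourier d φ j) := by
  simp only [finFourier, dagVec, map_sum, map_mul]
  refine Fintype.sum_equiv (Equiv.neg (Fin d)) _ _ fun i => ?_
  simp [AddChar.map_neg_eq_conj]

lemma finFourier_evec : finFourier d (evec d) = 1 := by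
  funext j
  simp [finFourier, evec]

lemma Gmap_mul_conjTranspose (φ : Fin d → ℂ) :
    Gmap d φ * (Gmap d φ)ᴴ = Gmap d (conv d φ (dagVec d φ)) := by
  simp only [Gmap_eq_diagonal_finFourier, diagonal_conjTranspose, diagonal_mul_diagonal]
  congr 1
  funext j
  rw [finFourier_conv, finFourier_dagVec]
  rfl

lemma Gmap_evec : Gmap d (evec d) = 1 := by
  rw [Gmap_eq_diagonal_finFourier, finFourier_evec]
  exact diagonal_one

lemma Gmap_mem_unitaryGroup {φ : Fin d → ℂ} (hφ : conv d φ (dagVec d φ) = evec d) :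
    Gmap d φ ∈ unitaryGroup (Fin d) ℂ := by
  rw [mem_unitaryGroup_iff, star_eq_conjTranspose, Gmap_mul_conjTranspose, hφ, Gmap_evec]

end Fourier

namespace AddChar

variable {R : Type*} [CommRing R]

def chirp (ψ : AddChar R ℂ) (a b x : R) : ℂ := ψ (a * x ^ 2 + b * x)

lemma chirp_mul_conj_chirp_sub [Finite R] (ψ : AddChar R ℂ) (a b q x : R) :
    chirp ψ a b x * starRingEnd ℂ (chirp ψ a b (x - q)) =
      ψ (b * q - a * q ^ 2) * ψ (x * (2 * a * q)) := by
  rw [chirp, chirp, ← map_neg_eq_conj, ← map_add_eq_mul, ← map_add_eq_mul]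
  ring_nf

lemma sum_chirp_mul_conj_chirp_sub [Fintype R] [IsDomain R] [DecidableEq R]
    {ψ : AddChar R ℂ} (hψ : ψ.IsPrimitive) {a : R} (ha : 2 * a ≠ 0) (b q : R) :
    ∑ x, chirp ψ a b x * starRingEnd ℂ (chirp ψ a b (x - q)) =
      if q = 0 then (Fintype.card R : ℂ) else 0 := by
  simp only [chirp_mul_conj_chirp_sub, ← Finset.mul_sum, sum_mulShift _ hψ, mul_eq_zero, ha,
    false_or]
  split_ifs with hq <;> simp [hq]

end AddChar

lemma alphaSum_mul_two {d h : ℕ} (hh : h ≤ d) :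
    (alphaSum d h : ℤ) * 2 = d * (d - 1) - h * (h - 1) := by
  have gauss (n : ℕ) : (∑ j ∈ Finset.range n, (j : ℤ)) * 2 = n * (n - 1) := by
    induction n with
    | zero => simp
    | succ n ih => rw [Finset.sum_range_succ, add_mul, ih]; push_cast; ring
  rw [alphaSum, Nat.cast_sum, Finset.sum_Ico_eq_sub _ hh, sub_mul, gauss, gauss]

lemma two_mul_alphaSum_zmod {d h : ℕ} (hh : h ≤ d) :
    2 * (alphaSum d h : ZMod d) = h - h ^ 2 := by
  have := congrArg (Int.cast : ℤ → ZMod d) (alphaSum_mul_two hh)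
  push_cast [ZMod.natCast_self] at this
  linear_combination this

lemma gvec_apply_eq_chirp (d k t : ℕ) [Fact d.Prime] (h2 : (2 : ZMod d) ≠ 0) (h : Fin d) :
    gvec d k t h = 1 / (Real.sqrt d : ℂ) *
      ZMod.stdAddChar.chirp ((k : ZMod d) / 2) (-((t : ZMod d) + (k : ZMod d) / 2)) (ZMod.finEquiv d h) := by
  rw [gvec, omega_pow_eq_stdAddChar, omega_pow_eq_stdAddChar, ← AddChar.map_neg_eq_inv,
    mul_assoc, ← AddChar.map_add_eq_mul, AddChar.chirp]
  congr 2
  have hα := two_mul_alphaSum_zmod h.is_lt.le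
  push_cast [Nat.cast_sub h.is_lt.le, ZMod.natCast_self, ZMod.finEquiv_apply]
  linear_combination (norm := skip) -(k : ZMod d) / 2 * hα
  field_simp
  ring

lemma conv_dagVec_eq_sum_finEquiv (d : ℕ) [NeZero d] {φ : Fin d → ℂ} (c : ℂ) (f : ZMod d → ℂ)
    (hφ : ∀ i, φ i = c * f (ZMod.finEquiv d i)) (q : Fin d) :
    conv d φ (dagVec d φ) q =
      c * starRingEnd ℂ c * ∑ x, f x * starRingEnd ℂ (f (x - ZMod.finEquiv d q)) := by
  simp only [conv, dagVec, neg_sub, hφ, map_mul, map_sub, Finset.mul_sum]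
  refine Fintype.sum_equiv (ZMod.finEquiv d).toEquiv _ _ fun i => ?_
  simp only [RingEquiv.toEquiv_eq_coe, EquivLike.coe_coe]
  ring

theorem conv_gvec_dagVec (d : ℕ) [NeZero d] (hd : d.Prime) (hodd : Odd d) (k t : ℕ)
    (hk : (k : ZMod d) ≠ 0) :
    conv d (gvec d k t) (dagVec d (gvec d k t)) = evec d := by
  have := Fact.mk hd
  have h2 : (2 : ZMod d) ≠ 0 := by
    rw [Ne, ← Nat.cast_ofNat, ZMod.natCast_eq_zero_iff, Nat.prime_dvd_prime_iff_eq hd Nat.prime_two]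
    rintro rfl
    exact Nat.not_odd_iff_even.mpr even_two hodd
  have hnorm : 1 / (Real.sqrt d : ℂ) * starRingEnd ℂ (1 / (Real.sqrt d : ℂ)) * d = 1 := by
    have hsq : (Real.sqrt d : ℂ) ^ 2 = d := by exact_mod_cast Real.sq_sqrt (Nat.cast_nonneg d)
    have hd0 : (d : ℂ) ≠ 0 := Nat.cast_ne_zero.mpr hd.ne_zero
    rw [map_div₀, map_one, Complex.conj_ofReal, div_mul_div_comm, one_mul, ← sq, hsq,
      one_div_mul_cancel hd0]
  funext q
  rw [conv_dagVec_eq_sum_finEquiv d _ _ (gvec_apply_eq_chirp d k t h2),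
    AddChar.sum_chirp_mul_conj_chirp_sub (ZMod.isPrimitive_stdAddChar d)
      (mul_ne_zero h2 (div_ne_zero hk h2)), ZMod.card]
  simp only [evec, map_eq_zero_iff _ (ZMod.finEquiv d).injective, mul_ite, hnorm, mul_zero]

theorem gvec_unitary (d : ℕ) [NeZero d] (hd : d.Prime) (hodd : Odd d)
    (k t : ℕ) (hk1 : 1 ≤ k) (hk2 : k ≤ d - 1) :
    conv d (gvec d k t) (dagVec d (gvec d k t)) = evec d ∧
    Gmap d (gvec d k t) ∈ Matrix.unitaryGroup (Fin d) ℂ := by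
  have hk : (k : ZMod d) ≠ 0 := by
    rw [Ne, ZMod.natCast_eq_zero_iff]
    exact fun hdvd => absurd (Nat.le_of_dvd hk1 hdvd) (by omega)
  have hconv := conv_gvec_dagVec d hd hodd k t hk
  exact ⟨hconv, Gmap_mem_unitaryGroup d hconv⟩
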